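/- Let s = 2 and define a₁,…,a_r by a₁ = (a_r, id)σ, a₂ = (id, a₁)σ, a_i = (a_{i−1}, id) for 3 ≤ i ≤ r, and let G be their closed generated subgroup. For each j, let N_j be the closed normal subgroup of G generated by the G-conjugates of all a_ℓ with ℓ ≢ j, j−1 (mod r). Then for any i the natural homomorphism G → G/N_i × G/N_{i+1} × ⋯ × G/N_{i+r−2} is surjective (indices mod r). -/

import Mathlib

/-!
Write `P_j = a_j a_{j-1} ⋯ a_{j-r+1}` for the descending cyclic products of the generators. The
recursion gives `P_0 = (P_{-1}, 1)` with `P_{-1} = a_0⁻¹ P_0 a_0`, so by induction on the level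
`P_0` acts trivially on the whole tree, and all its cyclic rotations `P_j` are trivial as well.
Reading `P_j = 1` as `a_j a_{j-1} = (a_{j-2} ⋯ a_{j-r+1})⁻¹` shows `a_j a_{j-1} ∈ N_j`, so the
group generated by the `a_l` lies in `⟨a_j⟩ N_j`, and by compactness of `Ω` its closure `G` lies
in `closure ⟨a_j⟩ · N_j`. Since `a_l ∈ N_j` for `l ≠ j, j - 1`, a solution modulo
`N_i, …, N_{i+m}` is corrected modulo `N_{i+m+1}` by an element of `closure ⟨a_{i+m+1}⟩`
without disturbing the earlier congruences, as long as `m + 1 ≤ r - 2`.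
-/

namespace BinTree

/-- Vertices of the infinite rooted binary tree: finite words over `{0,1}`. -/
abbrev Vertex : Type := List Bool

/-- A function on vertices is a tree automorphism function if it preserves lengths
(levels) and prefixes. -/
def IsTreeAutFun (f : Vertex → Vertex) : Prop :=
  (∀ v, (f v).length = v.length) ∧ ∀ v w : Vertex, (f (v ++ w)).take v.length = f v

/-- `Ω`: the automorphism group of the infinite rooted binary tree, realized as the
subgroup of permutations of the set of vertices preserving the tree structure. -/
def TreeAut : Subgroup (Equiv.Perm Vertex) where
  carrier := {e | IsTreeAutFun ⇑e}
  one_mem' := ⟨fun _ => rfl, fun v w => by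
    simpa using List.take_left (l₁ := v) (l₂ := w)⟩
  mul_mem' := by
    rintro a b ha hb
    obtain ⟨ha1, ha2⟩ := ha
    obtain ⟨hb1, hb2⟩ := hb
    refine ⟨fun v => ?_, fun v w => ?_⟩
    · simp [Equiv.Perm.mul_apply, ha1, hb1]
    · have hb' : b (v ++ w) = b v ++ (b (v ++ w)).drop v.length := by
        conv_lhs => rw [← List.take_append_drop v.length (b (v ++ w)), hb2]
      have hlen : (b v).length = v.length := hb1 v
      calc ((a * b) (v ++ w)).take v.length
          = (a (b v ++ (b (v ++ w)).drop v.length)).take v.length := by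
            rw [Equiv.Perm.mul_apply, ← hb']
        _ = a (b v) := by rw [← hlen]; exact ha2 _ _
        _ = (a * b) v := rfl
  inv_mem' := by
    intro a ha
    obtain ⟨ha1, ha2⟩ := ha
    show IsTreeAutFun ⇑a⁻¹
    have hlen : ∀ v : Vertex, (a⁻¹ v).length = v.length := by
      intro v
      have h := ha1 (a⁻¹ v)
      rw [show ∀ x, a (a⁻¹ x) = x from Equiv.apply_symm_apply a] at h
      exact h.symm ▸ rfl
    refine ⟨hlen, fun v w => ?_⟩
    have htl : ((a⁻¹ (v ++ w)).take v.length).length = v.length := by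
      rw [List.length_take, hlen, List.length_append]
      omega
    have key : a ((a⁻¹ (v ++ w)).take v.length) = v := by
      have h2 := ha2 ((a⁻¹ (v ++ w)).take v.length) ((a⁻¹ (v ++ w)).drop v.length)
      rw [List.take_append_drop, htl, show ∀ x, a (a⁻¹ x) = x from Equiv.apply_symm_apply a] at h2
      rw [← h2]
      simpa using List.take_left (l₁ := v) (l₂ := w)
    have h3 := congrArg (⇑a⁻¹) key
    rwa [show ∀ x, a⁻¹ (a x) = x from Equiv.symm_apply_apply a] at h3

/-- wreath recursion, forward map: `(g,h)σᵗ` -/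
def wrFun (g h : Vertex → Vertex) (t : Bool) : Vertex → Vertex
  | [] => []
  | x :: v => (xor x t) :: (cond x (h v) (g v))

/-- wreath recursion, inverse map -/
def wrFunInv (g h : Vertex → Vertex) (t : Bool) : Vertex → Vertex
  | [] => []
  | y :: w => (xor y t) :: (cond (xor y t) (h w) (g w))

/-- `(g,h)σᵗ` as a permutation of the vertices. -/
def wrPerm (g h : Equiv.Perm Vertex) (t : Bool) : Equiv.Perm Vertex where
  toFun := wrFun ⇑g ⇑h t
  invFun := wrFunInv ⇑g.symm ⇑h.symm t
  left_inv := by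
    intro v
    cases v with
    | nil => rfl
    | cons x v => cases x <;> cases t <;> simp [wrFun, wrFunInv]
  right_inv := by
    intro v
    cases v with
    | nil => rfl
    | cons x v => cases x <;> cases t <;> simp [wrFun, wrFunInv]

/-- The element `(g,h)σᵗ` of `Ω`: acts on the first level by `σᵗ` (where `σ` is the
swap of the two level-one subtrees), with section `g` at the vertex `0` and section
`h` at the vertex `1`.  Thus `(γ₀,γ₁)τ` of the wreath recursion
`Ω ≃ (Ω × Ω) ⋊ S₂` is `wr γ₀ γ₁ t` (`t = true` iff `τ = σ`). -/
def wr (g h : TreeAut) (t : Bool) : TreeAut :=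
  ⟨wrPerm g.1 h.1 t, by
    have hg : IsTreeAutFun ⇑g.1 := g.2
    have hh : IsTreeAutFun ⇑h.1 := h.2
    constructor
    · intro v
      cases v with
      | nil => rfl
      | cons x v =>
        cases x <;> simp [wrPerm, wrFun, hg.1, hh.1]
    · intro v w
      cases v with
      | nil => simp [wrPerm, wrFun]
      | cons x v =>
        cases x <;> simp [wrPerm, wrFun, hg.2, hh.2]⟩

/-- Application of a tree automorphism to a vertex. -/
def ap (γ : TreeAut) (v : Vertex) : Vertex := γ.1 v

/-- The permutation induced by `γ ∈ Ω` on level `n` of the tree. -/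
def levelPerm (n : ℕ) (γ : TreeAut) : Equiv.Perm (List.Vector Bool n) where
  toFun v := ⟨γ.1 v.1, by
    have h : IsTreeAutFun ⇑γ.1 := γ.2
    rw [h.1 v.1]; exact v.2⟩
  invFun v := ⟨γ.1.symm v.1, by
    have h : IsTreeAutFun ⇑γ.1 := γ.2
    have h2 := h.1 (γ.1.symm v.1)
    rw [Equiv.apply_symm_apply] at h2
    exact h2.symm.trans v.2⟩
  left_inv v := Subtype.ext (Equiv.symm_apply_apply _ _)
  right_inv v := Subtype.ext (Equiv.apply_symm_apply _ _)

/-- Restriction to level `n` as a group homomorphism. -/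
def levelHom (n : ℕ) : TreeAut →* Equiv.Perm (List.Vector Bool n) where
  toFun := levelPerm n
  map_one' := Equiv.ext fun v => Subtype.ext rfl
  map_mul' := fun g h => Equiv.ext fun v => Subtype.ext rfl

/-- `sgn_n`: the sign of the permutation induced on level `n`. -/
def sgn (n : ℕ) (γ : TreeAut) : ℤˣ := Equiv.Perm.sign (levelPerm n γ)

/-- An odometer: acts as a single `2^n`-cycle on each level `n ≥ 1`. -/
def IsOdometer (γ : TreeAut) : Prop :=
  ∀ n : ℕ, 1 ≤ n → (levelPerm n γ).IsCycle ∧ (levelPerm n γ).support = Finset.univ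

/-- The profinite topology on `Ω`: the coarsest topology making all level
restrictions (to the discrete finite groups) continuous. -/
instance : TopologicalSpace TreeAut :=
  ⨅ n : ℕ, TopologicalSpace.induced (levelPerm n) ⊥

/-- A vertex `w` is in a stable cycle of `γ` of length `k`: its `γ`-orbit has exactly
`k` elements, and for every level `m` above the level of `w`, all level-`m` vertices
lying above this orbit are in one single `γ`-cycle (necessarily of length
`2^(m - n) * k`, which we record via the periodicity condition). -/
def InStableCycle (γ : TreeAut) (w : Vertex) (k : ℕ) : Prop :=
  0 < k ∧ ap (γ ^ k) w = w ∧ (∀ j : ℕ, 0 < j → j < k → ap (γ ^ j) w ≠ w) ∧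
  (∀ u : Vertex, w.length < u.length → (∃ i : ℕ, u.take w.length = ap (γ ^ i) w) →
    (ap (γ ^ (2 ^ (u.length - w.length) * k)) u = u ∧
      ∀ u' : Vertex, u'.length = u.length →
        (∃ i : ℕ, u'.take w.length = ap (γ ^ i) w) → ∃ j : ℕ, ap (γ ^ j) u = u'))

/-- Self-similar subgroup: closed under taking sections (here the section of `γ` at
the first-level vertex `x` is characterized by `(xv)γ = (x)γ ⬝ (v)γₓ`). -/
def SelfSimilar (H : Subgroup TreeAut) : Prop :=
  ∀ γ ∈ H, ∀ x : Bool, ∀ δ : TreeAut,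
    (∀ v : Vertex, ap γ (x :: v) = ap γ [x] ++ ap δ v) → δ ∈ H

lemma treeAut_ext {g h : TreeAut} (H : ∀ v : Vertex, g.1 v = h.1 v) : g = h :=
  Subtype.ext (Equiv.ext H)

lemma wr_mul_false (g h g' h' : TreeAut) (t : Bool) :
    wr g h t * wr g' h' false = wr (g * g') (h * h') t :=
  treeAut_ext fun
    | [] => rfl
    | x :: _ => by cases x <;> rfl

lemma wr_mul_true (g h g' h' : TreeAut) (t : Bool) :
    wr g h t * wr g' h' true = wr (h * g') (g * h') (!t) :=
  treeAut_ext fun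
    | [] => rfl
    | x :: _ => by cases x <;> cases t <;> rfl

def wrLeft : TreeAut →* TreeAut where
  toFun g := wr g 1 false
  map_one' := treeAut_ext fun
    | [] => rfl
    | x :: _ => by cases x <;> rfl
  map_mul' g h := by rw [wr_mul_false, mul_one]

lemma eq_one_of_eq_wrLeft_conj {w c : TreeAut} (h : w = wrLeft (c⁻¹ * w * c)) : w = 1 := by
  suffices ∀ n, ∀ v : Vertex, v.length = n → w.1 v = v from treeAut_ext fun v => this _ v rfl
  intro n
  induction n with
  | zero =>
    intro v hv
    rw [List.eq_nil_of_length_eq_zero hv]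
    exact List.eq_nil_of_length_eq_zero (w.2.1 [])
  | succ n ih =>
    rintro (_ | ⟨x, v⟩) hv
    · simp at hv
    have hcv : w.1 (c.1 v) = c.1 v := ih _ ((c.2.1 v).trans (by simpa using hv))
    rw [h]
    cases x
    · show false :: (c⁻¹ * w * c).1 v = false :: v
      simp [hcv]
    · rfl

lemma natCast_eq_natCast_of_lt {r k l : ℕ} (hk : k < r) (hl : l < r)
    (h : (k : ZMod r) = l) : k = l := by
  rwa [ZMod.natCast_eq_natCast_iff', Nat.mod_eq_of_lt hk, Nat.mod_eq_of_lt hl] at h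

section CyclicProduct

variable {K : Type*} [Group K] {r : ℕ}

def cyclicProd (a : ZMod r → K) (j : ZMod r) : K :=
  ((List.range r).map fun m : ℕ => a (j - m)).prod

variable (a : ZMod r → K)

lemma cyclicProd_sub_one [NeZero r] (j : ZMod r) :
    cyclicProd a (j - 1) = (a j)⁻¹ * cyclicProd a j * a j := by
  obtain ⟨n, rfl⟩ := Nat.exists_eq_succ_of_ne_zero (NeZero.ne r)
  have h : (j - 1 - n : ZMod (n + 1)) = j := by
    rw [sub_sub, add_comm, ← Nat.cast_add_one, ZMod.natCast_self, sub_zero]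
  rw [cyclicProd, cyclicProd, List.prod_range_succ, List.prod_range_succ', h]
  simp only [Nat.cast_zero, sub_zero, Nat.cast_succ, sub_sub, add_comm (1 : ZMod (n + 1)),
    inv_mul_cancel_left]

lemma cyclicProd_eq_one_of_eq_one [NeZero r] {j : ZMod r} (h : cyclicProd a j = 1)
    (k : ZMod r) : cyclicProd a k = 1 := by
  have hsub : ∀ n : ℕ, cyclicProd a (j - n) = 1 := by
    intro n
    induction n with
    | zero => simpa using h
    | succ n ih => rw [Nat.cast_succ, ← sub_sub, cyclicProd_sub_one, ih]; group
  simpa using hsub (j - k).val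

lemma mul_sub_one_mem_of_cyclicProd_eq_one (hr : 2 ≤ r) {j : ZMod r} (h : cyclicProd a j = 1)
    {H : Subgroup K} (hH : ∀ l, l ≠ j → l ≠ j - 1 → a l ∈ H) : a j * a (j - 1) ∈ H := by
  obtain ⟨n, rfl⟩ := Nat.exists_eq_add_of_le' hr
  set rest := ((List.range n).map fun m : ℕ => a (j - (m + 2 : ℕ))).prod
  have hrest : rest ∈ H := by
    refine Subgroup.list_prod_mem _ fun x hx => ?_
    obtain ⟨m, hm, rfl⟩ := List.mem_map.1 hx
    have hm : m < n := List.mem_range.1 hm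
    refine hH _ (fun h' => ?_) fun h' => ?_
    · have := natCast_eq_natCast_of_lt (by omega) (by omega)
        ((sub_eq_self.1 h').trans Nat.cast_zero.symm)
      omega
    · have := natCast_eq_natCast_of_lt (by omega) (by omega)
        ((sub_right_inj.1 h').trans Nat.cast_one.symm)
      omega
  have hrel : a j * a (j - 1) * rest = 1 := by
    rw [← h, cyclicProd, List.prod_range_succ', List.prod_range_succ', mul_assoc]
    simp [rest, add_assoc, one_add_one_eq_two]
  rw [eq_inv_of_mul_eq_one_left hrel]
  exact inv_mem hrest

end CyclicProduct

section Generators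

variable {r : ℕ} {a : ZMod r → TreeAut}

lemma cyclicProd_eq_one (hr : 2 ≤ r)
    (ha1 : a 1 = wr (a (r : ZMod r)) 1 true)
    (ha2 : a 2 = wr 1 (a 1) true)
    (hhi : ∀ i : ℕ, 3 ≤ i → i ≤ r → a (i : ZMod r) = wr (a ((i - 1 : ℕ) : ZMod r)) 1 false)
    (j : ZMod r) : cyclicProd a j = 1 := by
  obtain ⟨n, rfl⟩ := Nat.exists_eq_add_of_le' hr
  have h0 : (n : ZMod (n + 2)) + 2 = 0 := by exact_mod_cast ZMod.natCast_self (n + 2)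
  rw [ZMod.natCast_self] at ha1
  have hdesc : ∀ m ∈ List.range n, a (0 - m) = wrLeft (a (0 - 1 - m)) := by
    intro m hm
    have hm : m < n := List.mem_range.1 hm
    have e1 : ((n + 2 - m : ℕ) : ZMod (n + 2)) = 0 - m := by
      rw [Nat.cast_sub (by omega)]; push_cast; linear_combination h0
    have e2 : ((n + 2 - m - 1 : ℕ) : ZMod (n + 2)) = 0 - 1 - m := by
      rw [Nat.sub_sub, Nat.cast_sub (by omega)]; push_cast; linear_combination h0
    rw [← e1, ← e2]
    exact hhi _ (by omega) (by omega)
  have hwr : cyclicProd a 0 = wrLeft (cyclicProd a (0 - 1)) := by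
    have e1 : (0 - n : ZMod (n + 2)) = 2 := by linear_combination -h0
    have e2 : (0 - (n + 1 : ℕ) : ZMod (n + 2)) = 1 := by push_cast; linear_combination -h0
    have e3 : (0 - 1 - n : ZMod (n + 2)) = 1 := by linear_combination -h0
    have e4 : (0 - 1 - (n + 1 : ℕ) : ZMod (n + 2)) = 0 := by push_cast; linear_combination -h0
    simp only [cyclicProd, List.prod_range_succ, e1, e2, e3, e4]
    have h21 : a 2 * a 1 = wrLeft (a 1 * a 0) := by
      rw [ha2]
      nth_rw 2 [ha1]
      rw [wr_mul_true, one_mul]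
      rfl
    rw [List.map_congr_left hdesc, mul_assoc, mul_assoc, map_mul, h21, map_list_prod,
      List.map_map]
    rfl
  refine cyclicProd_eq_one_of_eq_one a (j := 0) (eq_one_of_eq_wrLeft_conj (c := a 0) ?_) j
  rwa [cyclicProd_sub_one] at hwr

end Generators

section Topology

/-- `Ω` is compact as a closed subspace of the product of these finite discrete groups. -/
abbrev levelTopology (n : ℕ) : TopologicalSpace (Equiv.Perm (List.Vector Bool n)) := ⊥

attribute [local instance] levelTopology

lemma discreteTopology_levelTopology (n : ℕ) :
    DiscreteTopology (Equiv.Perm (List.Vector Bool n)) := ⟨rfl⟩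

attribute [local instance] discreteTopology_levelTopology

instance : IsTopologicalGroup TreeAut :=
  topologicalGroup_iInf fun n => topologicalGroup_induced (levelHom n)

def levelFamily (γ : TreeAut) (n : ℕ) : Equiv.Perm (List.Vector Bool n) := levelPerm n γ

lemma perm_length_apply (p : ∀ n, Equiv.Perm (List.Vector Bool n)) {n : ℕ}
    (v : List.Vector Bool n) : (p v.1.length ⟨v.1, rfl⟩).1 = (p n v).1 := by
  obtain ⟨w, rfl⟩ := v
  rfl

def ofLevelFamily (p : ∀ n, Equiv.Perm (List.Vector Bool n)) : Equiv.Perm Vertex where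
  toFun w := (p w.length ⟨w, rfl⟩).1
  invFun w := ((p w.length).symm ⟨w, rfl⟩).1
  left_inv w := (perm_length_apply (fun n => (p n).symm) _).trans
    (congrArg Subtype.val ((p w.length).symm_apply_apply _))
  right_inv w := (perm_length_apply p _).trans
    (congrArg Subtype.val ((p w.length).apply_symm_apply _))

lemma isInducing_levelFamily : Topology.IsInducing levelFamily := by
  constructor
  show (⨅ n : ℕ, TopologicalSpace.induced (levelPerm n) ⊥) = _
  rw [Pi.topologicalSpace, induced_iInf]
  exact iInf_congr fun n => (induced_compose (f := levelFamily) (g := fun p => p n)).symm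

lemma levelFamily_injective : Function.Injective levelFamily := fun _ _ h =>
  treeAut_ext fun v => congrArg (fun e => (e ⟨v, rfl⟩ : List.Vector Bool v.length).1)
    (congrFun h v.length)

lemma range_levelFamily :
    Set.range levelFamily = {p | IsTreeAutFun (ofLevelFamily p)} := by
  ext p
  constructor
  · rintro ⟨γ, rfl⟩
    exact γ.2
  · intro hp
    exact ⟨⟨ofLevelFamily p, hp⟩, funext fun n => Equiv.ext fun v =>
      Subtype.ext (perm_length_apply p v)⟩

lemma isClosed_setOf_levels (m k : ℕ)
    (P : Equiv.Perm (List.Vector Bool m) → Equiv.Perm (List.Vector Bool k) → Prop) :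
    IsClosed {p : ∀ n, Equiv.Perm (List.Vector Bool n) | P (p m) (p k)} := by
  have hf : Continuous fun p : (∀ n, Equiv.Perm (List.Vector Bool n)) => (p m, p k) := by
    fun_prop
  exact (isClosed_discrete {q | P q.1 q.2}).preimage hf

lemma isClosed_range_levelFamily : IsClosed (Set.range levelFamily) := by
  rw [range_levelFamily]
  simp only [IsTreeAutFun, Set.ofPred_and, Set.ofPred_forall]
  exact (isClosed_iInter fun v => isClosed_setOf_levels v.length v.length
      fun q _ => (q ⟨v, rfl⟩).1.length = v.length).inter
    (isClosed_iInter fun v => isClosed_iInter fun w =>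
      isClosed_setOf_levels (v ++ w).length v.length fun q q' =>
        (q ⟨v ++ w, rfl⟩).1.take v.length = (q' ⟨v, rfl⟩).1)

instance : CompactSpace TreeAut :=
  (Topology.IsClosedEmbedding.mk ⟨isInducing_levelFamily, levelFamily_injective⟩
    isClosed_range_levelFamily).compactSpace

end Topology

open scoped Pointwise

lemma closure_mul_subset_of_compactSpace {K : Type*} [Group K] [TopologicalSpace K]
    [IsTopologicalGroup K] [CompactSpace K] (s t : Set K) :
    closure (s * t) ⊆ closure s * closure t :=
  closure_minimal (Set.mul_subset_mul subset_closure subset_closure)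
    (isClosed_closure.mul_left_of_isCompact isClosed_closure.isCompact)

lemma exists_forall_inv_mul_mem {K ι : Type*} [Group K] (G : Subgroup K) (Z N : ι → Subgroup K)
    (J : ℕ → ι) (n : ℕ) (hZG : ∀ j, Z j ≤ G) (hGZN : ∀ j, ∀ y ∈ G, ∃ z ∈ Z j, z⁻¹ * y ∈ N j)
    (hZN : ∀ k l, k < l → l < n → Z (J l) ≤ N (J k)) (t : ι → K) (ht : ∀ j, t j ∈ G) :
    ∃ g ∈ G, ∀ k < n, g⁻¹ * t (J k) ∈ N (J k) := by
  induction n with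
  | zero => exact ⟨1, one_mem G, fun k hk => absurd hk k.not_lt_zero⟩
  | succ n ih =>
    obtain ⟨g, hg, hgN⟩ := ih fun k l hkl hl => hZN k l hkl (by omega)
    obtain ⟨z, hz, hzN⟩ := hGZN (J n) _ (mul_mem (inv_mem hg) (ht (J n)))
    refine ⟨g * z, mul_mem hg (hZG _ hz), fun k hk => ?_⟩
    rw [mul_inv_rev, mul_assoc]
    rcases Nat.lt_succ_iff_lt_or_eq.1 hk with hk | rfl
    · exact mul_mem (inv_mem (hZN k n hk (by omega) hz)) (hgN k hk)
    · exact hzN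

section ConjSubgroup

variable {K : Type*} [Group K] {r : ℕ} (G : Subgroup K) (a : ZMod r → K)

/-- Its topological closure is `N_j`. -/
def conjSubgroup (j : ZMod r) : Subgroup K :=
  Subgroup.closure {x | ∃ g ∈ G, ∃ l : ZMod r, l ≠ j ∧ l ≠ j - 1 ∧ x = g * a l * g⁻¹}

lemma mem_conjSubgroup {j l : ZMod r} (hj : l ≠ j) (hj' : l ≠ j - 1) :
    a l ∈ conjSubgroup G a j :=
  Subgroup.subset_closure ⟨1, one_mem G, l, hj, hj', by group⟩

lemma le_normalizer_conjSubgroup (j : ZMod r) :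
    G ≤ Subgroup.normalizer (conjSubgroup G a j : Set K) := by
  refine Subgroup.le_normalizer_closure_iff.2 fun h hh x ⟨g, hg, l, hl, hl', hx⟩ =>
    Subgroup.subset_closure ⟨h * g, mul_mem hh hg, l, hl, hl', ?_⟩
  rw [hx]
  group

lemma zpowers_le_conjSubgroup_of_lt (i : ZMod r) {k l : ℕ} (hkl : k < l) (hl : l + 1 < r) :
    Subgroup.zpowers (a (i + l)) ≤ conjSubgroup G a (i + k) := by
  refine Subgroup.zpowers_le.2 (mem_conjSubgroup G a (fun h => ?_) fun h => ?_)
  · have := natCast_eq_natCast_of_lt (by omega) (by omega) (add_left_cancel h)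
    omega
  · have : ((l + 1 : ℕ) : ZMod r) = k := by
      push_cast
      linear_combination h
    have := natCast_eq_natCast_of_lt (by omega) (by omega) this
    omega

variable {G a}

lemma closure_range_le_zpowers_sup (hr : 2 ≤ r) {j : ZMod r}
    (hrel : cyclicProd a j = 1) :
    Subgroup.closure (Set.range a) ≤ Subgroup.zpowers (a j) ⊔ conjSubgroup G a j := by
  have hadj : a j * a (j - 1) ∈ conjSubgroup G a j :=
    mul_sub_one_mem_of_cyclicProd_eq_one a hr hrel fun l => mem_conjSubgroup G a
  rw [Subgroup.closure_le]
  rintro _ ⟨l, rfl⟩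
  by_cases hl : l = j
  · exact Subgroup.mem_sup_left (hl ▸ Subgroup.mem_zpowers (a l))
  by_cases hl' : l = j - 1
  · rw [hl', ← inv_mul_cancel_left (a j) (a (j - 1))]
    exact mul_mem (Subgroup.mem_sup_left (inv_mem (Subgroup.mem_zpowers _)))
      (Subgroup.mem_sup_right hadj)
  · exact Subgroup.mem_sup_right (mem_conjSubgroup G a hl hl')

end ConjSubgroup

lemma exists_mem_closure_zpowers_inv_mul_mem {K : Type*} [Group K] [TopologicalSpace K]
    [IsTopologicalGroup K] [CompactSpace K] {r : ℕ} (hr : 2 ≤ r) {G : Subgroup K}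
    {a : ZMod r → K} {j : ZMod r} (haj : a j ∈ G) (hrel : cyclicProd a j = 1) :
    ∀ y ∈ (Subgroup.closure (Set.range a)).topologicalClosure,
      ∃ z ∈ (Subgroup.zpowers (a j)).topologicalClosure,
        z⁻¹ * y ∈ (conjSubgroup G a j).topologicalClosure := by
  have hnorm := (Subgroup.zpowers_le (H := Subgroup.normalizer _)).2
    (le_normalizer_conjSubgroup G a j haj)
  have hsub : (Subgroup.closure (Set.range a) : Set K) ⊆
      Subgroup.zpowers (a j) * conjSubgroup G a j := by
    rw [← Subgroup.coe_mul_of_left_le_normalizer_right _ _ hnorm]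
    exact closure_range_le_zpowers_sup hr hrel
  intro y hy
  obtain ⟨z, hz, x, hx, rfl⟩ := closure_mul_subset_of_compactSpace _ _ (closure_mono hsub hy)
  exact ⟨z, hz, by rwa [inv_mul_cancel_left]⟩

/-- case s = 2: with `G = ⟨⟨a₁,…,a_r⟩⟩` and `N_j` the closed normal
subgroup generated by the `G`-conjugates of all `a_ℓ`, `ℓ ≢ j, j−1 (mod r)`, the
natural map `G → G/N_i × ⋯ × G/N_{i+r−2}` is surjective: for any targets
`t_j ∈ G` there is `g ∈ G` with `g ≡ t_j mod N_j` for `j = i, …, i + r − 2`. -/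
theorem surjective_onto_quotients (r : ℕ) (hr : 3 ≤ r) (a : ZMod r → TreeAut)
    (ha1 : a 1 = wr (a (r : ZMod r)) 1 true)
    (ha2 : a 2 = wr 1 (a 1) true)
    (hhi : ∀ i : ℕ, 3 ≤ i → i ≤ r → a (i : ZMod r) = wr (a ((i - 1 : ℕ) : ZMod r)) 1 false)
    (G : Set TreeAut)
    (hG : G = closure ((Subgroup.closure (Set.range a) : Subgroup TreeAut) : Set TreeAut))
    (N : ZMod r → Set TreeAut)
    (hN : ∀ j : ZMod r, N j = closure ((Subgroup.closure
      {x : TreeAut | ∃ g ∈ G, ∃ l : ZMod r, l ≠ j ∧ l ≠ j - 1 ∧ x = g * a l * g⁻¹}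
      : Subgroup TreeAut) : Set TreeAut))
    (i : ZMod r) (t : ZMod r → TreeAut) (ht : ∀ j : ZMod r, t j ∈ G) :
    ∃ g ∈ G, ∀ m : ℕ, m ≤ r - 2 →
      g⁻¹ * t (i + (m : ZMod r)) ∈ N (i + (m : ZMod r)) := by
  set Γ := (Subgroup.closure (Set.range a)).topologicalClosure
  obtain rfl : G = Γ := hG
  have haΓ : ∀ l, a l ∈ Γ := fun l =>
    Subgroup.le_topologicalClosure _ (Subgroup.subset_closure ⟨l, rfl⟩)
  obtain ⟨g, hg, hgN⟩ := exists_forall_inv_mul_mem Γ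
    (fun j => (Subgroup.zpowers (a j)).topologicalClosure)
    (fun j => (conjSubgroup Γ a j).topologicalClosure) (fun m => i + m) (r - 1)
    (fun j => Subgroup.topologicalClosure_minimal _ (Subgroup.zpowers_le.2 (haΓ j))
      (Subgroup.closure (Set.range a)).isClosed_topologicalClosure)
    (fun j => exists_mem_closure_zpowers_inv_mul_mem (by omega) (haΓ j)
      (cyclicProd_eq_one (by omega) ha1 ha2 hhi j))
    (fun k l hkl hl => Subgroup.topologicalClosure_mono
      (zpowers_le_conjSubgroup_of_lt Γ a i hkl (by omega)))
    t ht
  exact ⟨g, hg, fun m hm => (hN _).symm ▸ hgN m (by omega)⟩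

end BinTree
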